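/- Let G be a v-critical finite simple graph with γ_R(G) = n. If e ∈ E(G) and G' = (V(G), E(G) \ {e}) is the graph obtained by deleting the edge e, then γ_R(G') = n. -/

import Mathlib

open SimpleGraph

/-- A Roman domination function on `G`. -/
def IsRomanFn {V : Type*} (G : SimpleGraph V) (r : V → Fin 3) : Prop :=
  ∀ u, r u = 0 → ∃ v, G.Adj u v ∧ r v = 2

/-- The weight of a Roman domination function. -/
noncomputable def romanWeight {V : Type*} [Fintype V] (r : V → Fin 3) : ℕ :=
  ∑ u, (r u : ℕ)

/-- The Roman domination number of `G`. -/
noncomputable def romanNumber {V : Type*} [Fintype V] (G : SimpleGraph V) : ℕ :=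
  sInf {w | ∃ r : V → Fin 3, IsRomanFn G r ∧ romanWeight r = w}

/-- `G` is vertex critical. -/
def VCritical {V : Type*} [Fintype V] [DecidableEq V] (G : SimpleGraph V) : Prop :=
  ∀ v : V, romanNumber (G.induce {u | u ≠ v}) = romanNumber G - 1

/-- `G` is edge critical. -/
def ECritical {V : Type*} [Fintype V] [DecidableEq V] (G : SimpleGraph V) : Prop :=
  VCritical G ∧ ∀ e ∈ G.edgeSet, ¬ VCritical (G.deleteEdges {e})

/-- `G` is Roman saturated. -/
def RomanSaturated {V : Type*} [Fintype V] (G : SimpleGraph V) : Prop :=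
  ∀ v w : V, v ≠ w → ¬ G.Adj v w →
    romanNumber (G ⊔ SimpleGraph.fromEdgeSet {s(v, w)}) = romanNumber G - 1

/-- `v` is a cut vertex of `G`. -/
def IsCutVertex {V : Type*} [Fintype V] [DecidableEq V] (G : SimpleGraph V) (v : V) : Prop :=
  Nat.card G.ConnectedComponent < Nat.card (G.induce {u | u ≠ v}).ConnectedComponent

/-!
Deleting an edge cannot decrease γ_R. Conversely, if `a` is an endpoint of `e`, then
`(G - e) - a = G - a`, and an optimal Roman function on `G - a` extended by the value `1`
at `a` is a Roman function on `G - e`; by v-criticality its weight is `γ_R(G) - 1 + 1 = γ_R(G)`, where the truncated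
subtraction is harmless because `γ_R(G) ≥ 1` on a nonempty vertex set.
-/

section RomanDomination

variable {V : Type*} [Fintype V]

lemma romanNumber_le_romanWeight (G : SimpleGraph V) {r : V → Fin 3} (hr : IsRomanFn G r) :
    romanNumber G ≤ romanWeight r :=
  Nat.sInf_le ⟨r, hr, rfl⟩

lemma exists_isRomanFn_romanWeight_eq_romanNumber (G : SimpleGraph V) :
    ∃ r : V → Fin 3, IsRomanFn G r ∧ romanWeight r = romanNumber G :=
  Nat.sInf_mem (s := {w | ∃ r : V → Fin 3, IsRomanFn G r ∧ romanWeight r = w})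
    ⟨_, fun _ => 1, fun _ h => by simp at h, rfl⟩

lemma romanNumber_antitone : Antitone (romanNumber : SimpleGraph V → ℕ) := by
  intro H G hHG
  obtain ⟨r, hr, hw⟩ := exists_isRomanFn_romanWeight_eq_romanNumber H
  rw [← hw]
  refine romanNumber_le_romanWeight G fun u hu => ?_
  obtain ⟨v, huv, hv⟩ := hr u hu
  exact ⟨v, hHG huv, hv⟩

lemma romanNumber_pos [Nonempty V] (G : SimpleGraph V) : 0 < romanNumber G := by
  obtain ⟨r, hr, hw⟩ := exists_isRomanFn_romanWeight_eq_romanNumber G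
  by_contra! h
  have hzero : ∀ u, r u = 0 := fun u => by
    have := Finset.sum_eq_zero_iff.mp (hw.trans (Nat.le_zero.mp h)) u (Finset.mem_univ u)
    omega
  obtain ⟨v, -, hv⟩ := hr (Classical.arbitrary V) (hzero _)
  simp [hzero v] at hv

lemma romanNumber_le_romanNumber_induce_add_one [DecidableEq V] (G : SimpleGraph V) (a : V) :
    romanNumber G ≤ romanNumber (G.induce {u | u ≠ a}) + 1 := by
  obtain ⟨r', hr', hw'⟩ := exists_isRomanFn_romanWeight_eq_romanNumber (G.induce {u | u ≠ a})
  let r : V → Fin 3 := fun u => if hu : u = a then 1 else r' ⟨u, hu⟩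
  have hr_ne : ∀ u (hu : u ≠ a), r u = r' ⟨u, hu⟩ := fun u hu => dif_neg hu
  have hroman : IsRomanFn G r := by
    intro u hu
    have hua : u ≠ a := by rintro rfl; simp [r] at hu
    obtain ⟨v, huv, hv⟩ := hr' ⟨u, hua⟩ (by rwa [← hr_ne u hua])
    exact ⟨v, huv, by rwa [hr_ne v v.2]⟩
  have hweight : romanWeight r = romanWeight r' + 1 := by
    unfold romanWeight
    rw [← Finset.add_sum_erase _ _ (Finset.mem_univ a), add_comm,
      Finset.sum_subtype (Finset.univ.erase a) (p := (· ∈ {u | u ≠ a})) (by simp)]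
    congr 1
    · exact Finset.sum_congr rfl fun u _ => by rw [hr_ne u u.2]
    · simp [r]
  calc romanNumber G ≤ romanWeight r := romanNumber_le_romanWeight G hroman
    _ = romanNumber (G.induce {u | u ≠ a}) + 1 := by rw [hweight, hw']

end RomanDomination

lemma induce_ne_deleteEdges_mk_left {V : Type*} (G : SimpleGraph V) (a b : V) :
    (G.deleteEdges {s(a, b)}).induce {u | u ≠ a} = G.induce {u | u ≠ a} := by
  ext u v
  simp only [comap_adj, Function.Embedding.subtype_apply, deleteEdges_adj,
    Set.mem_singleton_iff, and_iff_left_iff_imp]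
  intro _ huv
  have ha : a ∈ s((u : V), (v : V)) := huv ▸ Sym2.mem_mk_left a b
  rcases Sym2.mem_iff.mp ha with h | h
  exacts [u.2 h.symm, v.2 h.symm]

theorem romanNumber_deleteEdge_of_vCritical_general {V : Type*} [Fintype V] [DecidableEq V]
    (G : SimpleGraph V) (n : ℕ) (hv : VCritical G) (hn : romanNumber G = n)
    (e : Sym2 V) :
    romanNumber (G.deleteEdges {e}) = n := by
  induction e using Sym2.ind with
  | _ a b =>
  have : Nonempty V := ⟨a⟩
  have hpos := romanNumber_pos G
  apply le_antisymm
  · calc romanNumber (G.deleteEdges {s(a, b)})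
        ≤ romanNumber ((G.deleteEdges {s(a, b)}).induce {u | u ≠ a}) + 1 :=
          romanNumber_le_romanNumber_induce_add_one _ a
      _ = romanNumber G - 1 + 1 := by rw [induce_ne_deleteEdges_mk_left, hv a]
      _ = n := by omega
  · exact hn ▸ romanNumber_antitone (deleteEdges_le _)

/-- if `G` is v-critical with γ_R(G) = n and `e` is an edge, then deleting
`e` does not change the Roman domination number. -/
theorem romanNumber_deleteEdge_of_vCritical {V : Type*} [Fintype V] [DecidableEq V]
    (G : SimpleGraph V) (n : ℕ) (hv : VCritical G) (hn : romanNumber G = n)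
    (e : Sym2 V) (he : e ∈ G.edgeSet) :
    romanNumber (G.deleteEdges {e}) = n :=
  romanNumber_deleteEdge_of_vCritical_general G n hv hn e
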